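/- arXiv:2307.09309 — 5 statements merged into one kernel-verified Lean document; each statement's English description precedes it below -/
import Mathlib

section
/- Let G be a finite simple graph with m edges. Then mc(G) ≥ m/2 + (√(8m+1) − 1)/8. -/
/-!
Colour `G` properly with the least possible number `k` of colours. Then any two colour classes
are joined by an edge (otherwise they could be merged), so `k (k - 1) ≤ 2m`. Taking for `A` the
union of a uniformly random set of `⌊k/2⌋` colour classes, each edge is cut with probability
`2⌊k/2⌋⌈k/2⌉ / (k (k - 1)) ≥ (k + 1) / (2k)`, so some cut has at least `m/2 + m/(2k)` edges,
and `m/(2k) ≥ (√(8m+1) − 1)/8` is exactly `k (k - 1) ≤ 2m`.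
-/

/-- The number of edges of `G` crossing the cut `(A, Aᶜ)`. -/
noncomputable def cutSize {V : Type*} (G : SimpleGraph V) (A : Set V) : ℕ :=
  {p : V × V | G.Adj p.1 p.2 ∧ p.1 ∈ A ∧ p.2 ∉ A}.ncard

/-- `mc(G)`: the maximum size of a cut of `G`. -/
noncomputable def maxCut {V : Type*} (G : SimpleGraph V) : ℕ :=
  sSup {k | ∃ A : Set V, k = cutSize G A}

open Finset

theorem Finset.card_filter_powersetCard_mem_notMem {α : Type*} [DecidableEq α] {s : Finset α}
    {i j : α} (hi : i ∈ s) (hj : j ∈ s) (hij : i ≠ j) {t : ℕ} (ht : 1 ≤ t) :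
    #{B ∈ s.powersetCard t | i ∈ B ∧ j ∉ B} = (#s - 2).choose (t - 1) := by
  have hfilter : {B ∈ s.powersetCard t | i ∈ B ∧ j ∉ B} =
      {B ∈ (s.erase j).powersetCard t | {i} ⊆ B} := by
    ext B
    simp only [mem_filter, mem_powersetCard, subset_erase, singleton_subset_iff]
    tauto
  rw [hfilter, card_filter_powersetCard_subset _ _ _ (by simpa using mem_erase.2 ⟨hij, hi⟩)
    (by simpa using ht), card_erase_of_mem hj, card_singleton, Nat.sub_sub]

theorem Nat.choose_mul_mul_sub_eq {k t : ℕ} (ht : 1 ≤ t) (htk : t < k) :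
    k.choose t * (t * (k - t)) = k * (k - 1) * (k - 2).choose (t - 1) := by
  obtain ⟨n, rfl⟩ : ∃ n, k = n + 2 := ⟨k - 2, by omega⟩
  obtain ⟨s, rfl⟩ : ∃ s, t = s + 1 := ⟨t - 1, by omega⟩
  have h1 := Nat.add_one_mul_choose_eq (n + 1) s
  have h2 := Nat.choose_mul_succ_eq n s
  rw [show n + 2 - (s + 1) = n + 1 - s by omega]
  simp only [Nat.add_sub_cancel]
  calc (n + 2).choose (s + 1) * ((s + 1) * (n + 1 - s))
      = (n + 1 + 1) * (n + 1).choose s * (n + 1 - s) := by rw [h1]; ring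
    _ = (n + 2) * (n + 1) * n.choose s := by rw [mul_assoc _ _ (n + 1 - s), ← h2]; ring

theorem Nat.add_one_mul_sub_one_le_four_mul_half_mul (k : ℕ) :
    (k + 1) * (k - 1) ≤ 4 * (k / 2 * (k - k / 2)) := by
  obtain ⟨q, rfl | rfl⟩ := Nat.even_or_odd' k
  · rw [show 2 * q / 2 = q by omega, show 2 * q - q = q by omega]
    rcases q with _ | q
    · simp
    · rw [show 2 * (q + 1) - 1 = 2 * q + 1 by omega]
      nlinarith
  · rw [show (2 * q + 1) / 2 = q by omega, show 2 * q + 1 - q = q + 1 by omega,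
      Nat.add_sub_cancel]
    nlinarith

namespace SimpleGraph

variable {V α : Type*} [Fintype V] {G : SimpleGraph V}

theorem cutSize_eq_card_dart [DecidableRel G.Adj] (A : Set V) [DecidablePred (· ∈ A)] :
    cutSize G A = #{d : G.Dart | d.fst ∈ A ∧ d.snd ∉ A} := by
  have himage : {p : V × V | G.Adj p.1 p.2 ∧ p.1 ∈ A ∧ p.2 ∉ A} =
      Dart.toProd '' (({d : G.Dart | d.fst ∈ A ∧ d.snd ∉ A} : Finset G.Dart) : Set G.Dart) := by
    ext p
    constructor
    · rintro ⟨hp, hA⟩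
      exact ⟨⟨p, hp⟩, by simpa using hA, rfl⟩
    · rintro ⟨d, hd, rfl⟩
      exact ⟨d.adj, by simpa using hd⟩
  rw [cutSize, himage, Set.ncard_image_of_injective _ Dart.toProd_injective, Set.ncard_coe_finset]

theorem cutSize_le_maxCut (A : Set V) : cutSize G A ≤ maxCut G := by
  classical
  refine le_csSup ⟨Fintype.card G.Dart, ?_⟩ ⟨A, rfl⟩
  rintro _ ⟨B, rfl⟩
  exact (cutSize_eq_card_dart B).trans_le (card_filter_le _ _)

theorem Coloring.sum_cutSize_preimage_powersetCard [DecidableRel G.Adj] [Fintype α]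
    [DecidableEq α] (C : G.Coloring α) {t : ℕ} (ht : 1 ≤ t) :
    ∑ B ∈ (univ : Finset α).powersetCard t, cutSize G (C ⁻¹' (B : Set α)) =
      Fintype.card G.Dart * (Fintype.card α - 2).choose (t - 1) := by
  classical
  calc ∑ B ∈ (univ : Finset α).powersetCard t, cutSize G (C ⁻¹' (B : Set α))
      = ∑ B ∈ (univ : Finset α).powersetCard t, ∑ d : G.Dart,
          if C d.fst ∈ B ∧ C d.snd ∉ B then 1 else 0 := by
        simp only [cutSize_eq_card_dart, card_filter, Set.mem_preimage, mem_coe]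
    _ = ∑ d : G.Dart, #{B ∈ (univ : Finset α).powersetCard t | C d.fst ∈ B ∧ C d.snd ∉ B} := by
        rw [sum_comm]
        simp only [card_filter]
    _ = ∑ _d : G.Dart, (Fintype.card α - 2).choose (t - 1) := by
        refine sum_congr rfl fun d _ => ?_
        rw [card_filter_powersetCard_mem_notMem (mem_univ _) (mem_univ _) (C.valid d.adj) ht,
          card_univ]
    _ = _ := by rw [sum_const, card_univ, smul_eq_mul]

theorem Coloring.exists_cutSize_ge [DecidableRel G.Adj] [Fintype α] (C : G.Coloring α) :
    ∃ A, Fintype.card G.Dart * (Fintype.card α + 1) ≤ 4 * Fintype.card α * cutSize G A := by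
  classical
  set k := Fintype.card α
  rcases lt_or_ge k 2 with hk | hk
  · have : IsEmpty G.Dart := ⟨fun d =>
      C.valid d.adj (Fintype.card_le_one_iff_subsingleton.1 (by omega) |>.elim _ _)⟩
    exact ⟨∅, by simp⟩
  set t := k / 2
  have ht : 1 ≤ t := by omega
  have htk : t < k := by omega
  set D := Fintype.card G.Dart
  set K := k.choose t
  set N := (k - 2).choose (t - 1)
  obtain ⟨B, -, hB⟩ := exists_le_of_sum_le
    (powersetCard_nonempty.2 (by rw [card_univ]; exact htk.le))
    (s := (univ : Finset α).powersetCard t) (f := fun _ => D * N)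
    (g := fun B : Finset α => cutSize G (C ⁻¹' (B : Set α)) * K) (by
      rw [sum_const, card_powersetCard, card_univ, smul_eq_mul, ← sum_mul,
        C.sum_cutSize_preimage_powersetCard ht]
      exact le_of_eq (by ring))
  refine ⟨C ⁻¹' B, Nat.le_of_mul_le_mul_left ?_
    (Nat.mul_pos (Nat.choose_pos htk.le) (by omega : 0 < k - 1))⟩
  calc K * (k - 1) * (D * (k + 1)) = K * D * ((k + 1) * (k - 1)) := by ring
    _ ≤ K * D * (4 * (t * (k - t))) :=
        Nat.mul_le_mul_left _ k.add_one_mul_sub_one_le_four_mul_half_mul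
    _ = 4 * D * (K * (t * (k - t))) := by ring
    _ = 4 * k * (k - 1) * (D * N) := by rw [Nat.choose_mul_mul_sub_eq ht htk]; ring
    _ ≤ 4 * k * (k - 1) * (cutSize G (C ⁻¹' B) * K) := by gcongr
    _ = K * (k - 1) * (4 * k * cutSize G (C ⁻¹' B)) := by ring

theorem exists_coloring_forall_ne_exists_adj (G : SimpleGraph V) :
    ∃ k, ∃ C : G.Coloring (Fin k), ∀ i j, i ≠ j → ∃ u v, G.Adj u v ∧ C u = i ∧ C v = j := by
  classical
  have hcolorable : ∃ k, G.Colorable k := ⟨_, G.colorable_of_fintype⟩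
  obtain ⟨C⟩ := Nat.find_spec hcolorable
  refine ⟨_, C, fun i j hij => ?_⟩
  by_contra! hij_indep
  let merge (v : V) : {c : Fin _ // c ≠ j} := if h : C v = j then ⟨i, hij⟩ else ⟨C v, h⟩
  have hmerge : ∀ {u v}, G.Adj u v → merge u ≠ merge v := by
    intro u v huv
    have := C.valid huv
    simp only [merge, ne_eq]
    split_ifs with hu hv hv <;> simp only [Subtype.mk.injEq]
    · exact absurd (hu.trans hv.symm) this
    · exact fun h => hij_indep v u huv.symm h.symm hu
    · exact fun h => hij_indep u v huv h hv
    · exact this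
  have := Nat.find_min' hcolorable (Coloring.mk merge hmerge).colorable
  simp only [Fintype.card_subtype_compl, Fintype.card_fin, Fintype.card_unique] at this
  omega

theorem Coloring.card_mul_sub_one_le_card_dart [DecidableRel G.Adj] [Fintype α]
    (C : G.Coloring α) (hC : ∀ i j, i ≠ j → ∃ u v, G.Adj u v ∧ C u = i ∧ C v = j) :
    Fintype.card α * (Fintype.card α - 1) ≤ Fintype.card G.Dart := by
  classical
  calc Fintype.card α * (Fintype.card α - 1) = #(univ : Finset α).offDiag := by
        rw [offDiag_card, card_univ, Nat.mul_sub_one]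
    _ ≤ #(univ : Finset G.Dart) := by
        refine card_le_card_of_surjOn (fun d => (C d.fst, C d.snd)) ?_
        rintro ⟨i, j⟩ hij
        obtain ⟨u, v, huv, rfl, rfl⟩ := hC i j (mem_offDiag.1 hij).2.2
        exact ⟨⟨(u, v), huv⟩, mem_coe.2 (mem_univ _), rfl⟩
    _ = Fintype.card G.Dart := card_univ

end SimpleGraph

theorem div_two_add_sqrt_sub_one_div_eight_le {m k c : ℕ} (hk : k * (k - 1) ≤ 2 * m)
    (hc : 2 * m * (k + 1) ≤ 4 * k * c) :
    (m : ℝ) / 2 + (Real.sqrt (8 * m + 1) - 1) / 8 ≤ c := by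
  rcases Nat.eq_zero_or_pos k with rfl | hk0
  · obtain rfl : m = 0 := by omega
    simp
  have hk' : (k : ℝ) * (k - 1) ≤ 2 * m := by
    have := (Nat.cast_le (α := ℝ)).2 hk
    push_cast [Nat.cast_sub (show 1 ≤ k from hk0)] at this
    exact this
  have hc' : (2 * m * (k + 1) : ℝ) ≤ 4 * k * c := by exact_mod_cast hc
  set s := Real.sqrt (8 * m + 1)
  have hs : s ^ 2 = 8 * m + 1 := Real.sq_sqrt (by positivity)
  have hs0 : 0 ≤ s := Real.sqrt_nonneg _
  have hk1 : (1 : ℝ) ≤ k := by exact_mod_cast hk0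
  have h2k : 2 * (k : ℝ) - 1 ≤ s := by nlinarith
  have hks : (k : ℝ) * (s - 1) ≤ 4 * m := by nlinarith
  have : (k : ℝ) * ((m : ℝ) / 2 + (s - 1) / 8) ≤ k * c := by nlinarith
  exact le_of_mul_le_mul_left this (by positivity)

/-- Edwards' bound: every finite simple graph with `m` edges satisfies
`mc(G) ≥ m/2 + (√(8m+1) − 1)/8`. -/
theorem stmt_2 {V : Type*} [Fintype V] (G : SimpleGraph V) :
    (G.edgeSet.ncard : ℝ) / 2 + (Real.sqrt (8 * G.edgeSet.ncard + 1) - 1) / 8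
      ≤ (maxCut G : ℝ) := by
  classical
  obtain ⟨k, C, hC⟩ := G.exists_coloring_forall_ne_exists_adj
  obtain ⟨A, hA⟩ := SimpleGraph.Coloring.exists_cutSize_ge C
  have hk := SimpleGraph.Coloring.card_mul_sub_one_le_card_dart C hC
  have hdart : Fintype.card G.Dart = 2 * G.edgeSet.ncard := by
    rw [G.dart_card_eq_twice_card_edges, ← Set.ncard_coe_finset, SimpleGraph.coe_edgeFinset]
  rw [hdart, Fintype.card_fin] at hk hA
  calc _ ≤ (cutSize G A : ℝ) := div_two_add_sqrt_sub_one_div_eight_le hk hA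
    _ ≤ maxCut G := by exact_mod_cast SimpleGraph.cutSize_le_maxCut A
end

section
/- Let G be a graph and let {x^v : v ∈ V(G)} be nonzero vectors in ℝ^N. Let z be a uniformly random unit vector in ℝ^N, and define A = {v ∈ V(G) : ⟨x^v, z⟩ ≥ 0} and B = V(G) \ A. Then for each edge uv ∈ E(G), the probability that uv crosses the cut (A,B) equals (1/π)·arccos(⟨x^u,x^v⟩/(‖x^u‖·‖x^v‖)). -/
/-!
Normalise `x u` and `x v` to unit vectors `a`, `c` at angle `θ`. Whether `⟪a, z⟫` and `⟪c, z⟫`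
have different signs does not change when `z` is scaled by a positive factor, so the normalised
surface measure of these `z` equals the fraction of the unit ball they fill. Write
`a = cos (θ/2) • e₁ - sin (θ/2) • e₂` and `c = cos (θ/2) • e₁ + sin (θ/2) • e₂` with `e₁, e₂`
orthonormal. The image of Lebesgue measure on the ball under `y ↦ (⟪e₁, y⟫, ⟪e₂, y⟫)` has a
radial density (Fubini over the orthogonal complement), so in polar coordinates the fraction is
the total angle `2θ` of the double wedge where the two signs differ, divided by `2π`.
-/

open MeasureTheory Real Set Metric InnerProductGeometry
open scoped ENNReal RealInnerProductSpace Pointwise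

theorem setLIntegral_cone_radial {W : Set (ℝ × ℝ)} (hW : MeasurableSet W)
    (hcone : ∀ r : ℝ, 0 < r → ∀ q : ℝ × ℝ, r • q ∈ W ↔ q ∈ W) {f : ℝ → ℝ≥0∞}
    (hf : Measurable f) :
    ∫⁻ q in W, f (q.1 ^ 2 + q.2 ^ 2) =
      volume {φ ∈ Ioo (-π) π | (cos φ, sin φ) ∈ W} *
        ∫⁻ r in Ioi 0, ENNReal.ofReal r * f (r ^ 2) := by
  set A := {φ : ℝ | (cos φ, sin φ) ∈ W}
  have hA : MeasurableSet A := (continuous_cos.prodMk continuous_sin).measurable hW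
  rw [← lintegral_indicator hW, ← lintegral_comp_polarCoord_symm, polarCoord_target]
  calc _ = ∫⁻ p in Ioi 0 ×ˢ Ioo (-π) π,
        ENNReal.ofReal p.1 * f (p.1 ^ 2) * A.indicator 1 p.2 := by
        refine setLIntegral_congr_fun (measurableSet_Ioi.prod measurableSet_Ioo) fun p hp => ?_
        obtain ⟨r, φ⟩ := p
        have hmem : (r * cos φ, r * sin φ) ∈ W ↔ φ ∈ A := hcone r hp.1 (cos φ, sin φ)
        rw [polarCoord_symm_apply, smul_eq_mul]
        by_cases h : φ ∈ A
        · rw [indicator_of_mem (hmem.2 h), indicator_of_mem h, Pi.one_apply, mul_one, mul_pow,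
            mul_pow, ← mul_add, cos_sq_add_sin_sq, mul_one]
        · rw [indicator_of_notMem (mt hmem.1 h), indicator_of_notMem h, mul_zero, mul_zero]
    _ = _ := by
      rw [Measure.volume_eq_prod, ← Measure.prod_restrict,
        lintegral_prod_mul (f := fun r => ENNReal.ofReal r * f (r ^ 2)) (by fun_prop)
          (measurable_one.indicator hA).aemeasurable,
        lintegral_indicator_one hA, Measure.restrict_apply hA, mul_comm, inter_comm]
      rfl

theorem cos_nonneg_iff_abs_le {ψ : ℝ} (h : |ψ| < π + π / 2) : 0 ≤ cos ψ ↔ |ψ| ≤ π / 2 := by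
  rw [← cos_abs]
  refine ⟨fun hcos => ?_, fun hψ => cos_nonneg_of_mem_Icc ⟨by linarith [abs_nonneg ψ], hψ⟩⟩
  by_contra! hψ
  exact (cos_neg_of_pi_div_two_lt_of_lt hψ h).not_ge hcos

def doubleWedge (α : ℝ) : Set (ℝ × ℝ) :=
  {q | ¬(0 ≤ cos α * q.1 - sin α * q.2 ↔ 0 ≤ cos α * q.1 + sin α * q.2)}

theorem measurableSet_doubleWedge (α : ℝ) : MeasurableSet (doubleWedge α) := by
  unfold doubleWedge
  measurability

theorem smul_mem_doubleWedge_iff {α r : ℝ} (hr : 0 < r) (q : ℝ × ℝ) :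
    r • q ∈ doubleWedge α ↔ q ∈ doubleWedge α := by
  simp only [doubleWedge, mem_ofPred_eq, Prod.smul_fst, Prod.smul_snd, smul_eq_mul]
  rw [show cos α * (r * q.1) - sin α * (r * q.2) = r * (cos α * q.1 - sin α * q.2) by ring,
    show cos α * (r * q.1) + sin α * (r * q.2) = r * (cos α * q.1 + sin α * q.2) by ring,
    mul_nonneg_iff_of_pos_left hr, mul_nonneg_iff_of_pos_left hr]

theorem volume_angles_doubleWedge {α : ℝ} (hα₀ : 0 < α) (hα : α < π / 2) :
    volume {φ ∈ Ioo (-π) π | (cos φ, sin φ) ∈ doubleWedge α} = ENNReal.ofReal (4 * α) := by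
  have hwedge : ∀ φ, -π < φ → φ < π →
      ((cos φ, sin φ) ∈ doubleWedge α ↔ ¬(|φ + α| ≤ π / 2 ↔ |φ - α| ≤ π / 2)) := by
    intro φ h₁ h₂
    rw [doubleWedge, mem_ofPred_eq,
      show cos α * cos φ - sin α * sin φ = cos (φ + α) by rw [cos_add]; ring,
      show cos α * cos φ + sin α * sin φ = cos (φ - α) by rw [cos_sub]; ring,
      cos_nonneg_iff_abs_le (by rw [abs_lt]; constructor <;> linarith),
      cos_nonneg_iff_abs_le (by rw [abs_lt]; constructor <;> linarith)]
  have hangles : {φ ∈ Ioo (-π) π | (cos φ, sin φ) ∈ doubleWedge α} =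
      Ico (-(π / 2) - α) (-(π / 2) + α) ∪ Ioc (π / 2 - α) (π / 2 + α) := by
    ext φ
    simp only [mem_ofPred_eq, mem_union, mem_Ico, mem_Ioc, mem_Ioo]
    constructor
    · rintro ⟨⟨h₁, h₂⟩, h⟩
      rw [hwedge φ h₁ h₂, abs_le, abs_le] at h
      grind
    · intro h
      obtain ⟨h₁, h₂⟩ : -π < φ ∧ φ < π := by grind
      rw [hwedge φ h₁ h₂, abs_le, abs_le]
      grind
  have hdisj : Disjoint (Ico (-(π / 2) - α) (-(π / 2) + α)) (Ioc (π / 2 - α) (π / 2 + α)) :=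
    disjoint_left.2 fun φ h₁ h₂ => by linarith [h₁.2, h₂.1]
  rw [hangles, measure_union hdisj measurableSet_Ioc, volume_Ico, volume_Ioc,
    ← ENNReal.ofReal_add (by linarith) (by linarith)]
  ring_nf

theorem volume_prod_sumSq_lt {κ : Type*} [Fintype κ] {W : Set (ℝ × ℝ)} (hW : MeasurableSet W) :
    volume {p : (ℝ × ℝ) × (κ → ℝ) | p.1 ∈ W ∧ p.1.1 ^ 2 + p.1.2 ^ 2 + ∑ j, p.2 j ^ 2 < 1} =
      ∫⁻ q in W, volume {z : κ → ℝ | ∑ j, z j ^ 2 < 1 - (q.1 ^ 2 + q.2 ^ 2)} := by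
  have hsum : Measurable fun p : (ℝ × ℝ) × (κ → ℝ) =>
      p.1.1 ^ 2 + p.1.2 ^ 2 + ∑ j, p.2 j ^ 2 := by
    fun_prop
  have hT : MeasurableSet
      {p : (ℝ × ℝ) × (κ → ℝ) | p.1 ∈ W ∧ p.1.1 ^ 2 + p.1.2 ^ 2 + ∑ j, p.2 j ^ 2 < 1} :=
    (measurable_fst hW).inter (measurableSet_lt hsum measurable_const)
  rw [Measure.volume_eq_prod, Measure.prod_apply hT, ← lintegral_indicator hW]
  congr 1 with q
  by_cases hq : q ∈ W
  · rw [indicator_of_mem hq]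
    congr 1 with z
    simp only [mem_preimage, mem_ofPred_eq, hq, true_and]
    constructor <;> intro h <;> linarith
  · simp [hq]

section

variable {E : Type*} [NormedAddCommGroup E] [InnerProductSpace ℝ E]

def separatingDirections (a c : E) : Set E := {y | ¬(0 ≤ ⟪a, y⟫ ↔ 0 ≤ ⟪c, y⟫)}

theorem smul_mem_separatingDirections_iff {a c : E} {r : ℝ} (hr : 0 < r) (y : E) :
    r • y ∈ separatingDirections a c ↔ y ∈ separatingDirections a c := by
  simp only [separatingDirections, mem_ofPred_eq, real_inner_smul_right,
    mul_nonneg_iff_of_pos_left hr]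

theorem separatingDirections_smul_left {a c : E} {r : ℝ} (hr : 0 < r) :
    separatingDirections (r • a) c = separatingDirections a c := by
  ext y
  simp only [separatingDirections, mem_ofPred_eq, real_inner_smul_left,
    mul_nonneg_iff_of_pos_left hr]

theorem separatingDirections_smul_right {a c : E} {r : ℝ} (hr : 0 < r) :
    separatingDirections a (r • c) = separatingDirections a c := by
  ext y
  simp only [separatingDirections, mem_ofPred_eq, real_inner_smul_left,
    mul_nonneg_iff_of_pos_left hr]

theorem separatingDirections_self (a : E) : separatingDirections a a = ∅ := by
  simp [separatingDirections]

theorem compl_separatingDirections_smul_subset_of_neg {a : E} {r : ℝ} (hr : r < 0) :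
    (separatingDirections a (r • a))ᶜ ⊆ (ℝ ∙ a)ᗮ := by
  intro y hy
  simp only [separatingDirections, mem_compl_iff, mem_ofPred_eq, not_not,
    real_inner_smul_left] at hy
  rw [SetLike.mem_coe, Submodule.mem_orthogonal_singleton_iff_inner_right]
  rcases lt_trichotomy ⟪a, y⟫ 0 with h | h | h
  · linarith [hy.2 (mul_nonneg_of_nonpos_of_nonpos hr.le h.le)]
  · exact h
  · nlinarith [hy.1 h.le]

theorem separatingDirections_cos_sub_sin {e₁ e₂ : E} (α : ℝ) :
    separatingDirections (cos α • e₁ - sin α • e₂) (cos α • e₁ + sin α • e₂) =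
      (fun y => (⟪e₁, y⟫, ⟪e₂, y⟫)) ⁻¹' doubleWedge α := by
  ext y
  simp [separatingDirections, doubleWedge, inner_sub_left, inner_add_left, real_inner_smul_left]

/-- Taking `e₁` along the bisector of `a` and `c` makes the double wedge symmetric about the
`e₁`-axis, so it lies in a single period `(-π, π)` of the polar angle whatever `θ` is. -/
theorem exists_orthonormal_eq_cos_half_angle {a c : E} (ha : ‖a‖ = 1) (hc : ‖c‖ = 1)
    (h₀ : 0 < angle a c) (hπ : angle a c < π) :
    ∃ e₁ e₂ : E, Orthonormal ℝ ![e₁, e₂] ∧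
      a = cos (angle a c / 2) • e₁ - sin (angle a c / 2) • e₂ ∧
      c = cos (angle a c / 2) • e₁ + sin (angle a c / 2) • e₂ := by
  set α := angle a c / 2 with hα
  have hcos : 0 < cos α := cos_pos_of_mem_Ioo ⟨by linarith, by linarith⟩
  have hsin : 0 < sin α := sin_pos_of_pos_of_lt_pi (by linarith) (by linarith)
  have hac : ⟪a, c⟫ = cos α ^ 2 - sin α ^ 2 := by
    rw [← cos_angle_mul_norm_mul_norm, ha, hc, show angle a c = 2 * α by ring, cos_two_mul,
      sin_sq]
    ring
  have hadd : ‖a + c‖ = 2 * cos α := by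
    refine (sq_eq_sq₀ (norm_nonneg _) (by positivity)).1 ?_
    rw [norm_add_sq_real, ha, hc, hac]
    nlinarith [sin_sq_add_cos_sq α]
  have hsub : ‖c - a‖ = 2 * sin α := by
    refine (sq_eq_sq₀ (norm_nonneg _) (by positivity)).1 ?_
    rw [norm_sub_sq_real, ha, hc, real_inner_comm, hac]
    nlinarith [sin_sq_add_cos_sq α]
  have horth : ⟪‖a + c‖⁻¹ • (a + c), ‖c - a‖⁻¹ • (c - a)⟫ = 0 := by
    rw [real_inner_smul_left, real_inner_smul_right, inner_add_left, inner_sub_right,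
      inner_sub_right, real_inner_comm a c, real_inner_self_eq_norm_sq,
      real_inner_self_eq_norm_sq, ha, hc]
    ring
  refine ⟨‖a + c‖⁻¹ • (a + c), ‖c - a‖⁻¹ • (c - a), ⟨fun i => ?_, fun i j hij => ?_⟩, ?_, ?_⟩
  · fin_cases i
    exacts [norm_smul_inv_norm (norm_pos_iff.1 (by linarith)),
      norm_smul_inv_norm (norm_pos_iff.1 (by linarith))]
  · fin_cases i <;> fin_cases j
    exacts [absurd rfl hij, horth, (real_inner_comm _ _).trans horth, absurd rfl hij]
  all_goals
    rw [hadd, hsub, smul_smul, smul_smul, mul_inv_rev, mul_inv_rev, ← mul_assoc, ← mul_assoc,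
      mul_inv_cancel₀ hcos.ne', mul_inv_cancel₀ hsin.ne']
    module

theorem Orthonormal.exists_orthonormalBasis_sum_extension [FiniteDimensional ℝ E] {ι : Type*}
    [Fintype ι] {v : ι → E} (hv : Orthonormal ℝ v) :
    ∃ (k : ℕ) (B : OrthonormalBasis (ι ⊕ Fin k) ℝ E), ∀ i, B (.inl i) = v i := by
  have hcard := hv.linearIndependent.fintype_card_le_finrank
  set k := Module.finrank ℝ E - Fintype.card ι
  have hv' : Orthonormal ℝ ((range Sum.inl).domRestrict (Sum.elim v (0 : Fin k → E))) := by
    convert hv.comp _ (Equiv.Set.rangeInl ι (Fin k)).injective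
    ext ⟨_, i, rfl⟩ : 1
    rfl
  obtain ⟨B, hB⟩ := hv'.exists_orthonormalBasis_extension_of_card_eq (by simp; omega)
  exact ⟨k, B, fun i => hB _ (mem_range_self i)⟩

variable [MeasurableSpace E] [BorelSpace E]

theorem measurableSet_separatingDirections (a c : E) :
    MeasurableSet (separatingDirections a c) := by
  unfold separatingDirections
  measurability

theorem MeasureTheory.Measure.toSphere_preimage_cone [FiniteDimensional ℝ E] (μ : Measure E)
    [μ.IsAddHaarMeasure] {C : Set E} (hC : MeasurableSet C)
    (hcone : ∀ r : ℝ, 0 < r → ∀ y : E, r • y ∈ C ↔ y ∈ C) :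
    μ.toSphere ((↑) ⁻¹' C) = Module.finrank ℝ E * μ (C ∩ ball 0 1) := by
  nontriviality E
  rw [μ.toSphere_apply' (hC.preimage measurable_subtype_coe), Subtype.image_preimage_coe,
    ← measure_sdiff_null (s := C ∩ ball 0 1) (measure_singleton 0)]
  congr 2
  ext y
  simp only [mem_smul, mem_inter_iff, mem_sdiff, mem_singleton_iff, mem_ball_zero_iff,
    mem_sphere_zero_iff_norm, mem_Ioo]
  constructor
  · rintro ⟨r, ⟨hr₀, hr₁⟩, z, ⟨hz, hzC⟩, rfl⟩
    refine ⟨⟨(hcone r hr₀ z).2 hzC, ?_⟩,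
      smul_ne_zero hr₀.ne' (norm_ne_zero_iff.1 (by simp [hz]))⟩
    rwa [norm_smul, hz, mul_one, Real.norm_of_nonneg hr₀.le]
  · rintro ⟨⟨hyC, hy⟩, hy₀⟩
    have hn : 0 < ‖y‖ := norm_pos_iff.2 hy₀
    refine ⟨‖y‖, ⟨hn, hy⟩, ‖y‖⁻¹ • y, ⟨?_, (hcone _ (inv_pos.2 hn) y).2 hyC⟩,
      smul_inv_smul₀ hn.ne' y⟩
    rw [norm_smul, norm_inv, norm_norm, inv_mul_cancel₀ hn.ne']

variable [FiniteDimensional ℝ E]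

theorem exists_map_restrict_ball_inner_pair_eq_withDensity {e₁ e₂ : E}
    (he : Orthonormal ℝ ![e₁, e₂]) :
    ∃ g : ℝ → ℝ≥0∞, Measurable g ∧
      (volume.restrict (ball (0 : E) 1)).map (fun y => (⟪e₁, y⟫, ⟪e₂, y⟫)) =
        volume.withDensity fun q => g (q.1 ^ 2 + q.2 ^ 2) := by
  obtain ⟨k, B, hB⟩ := he.exists_orthonormalBasis_sum_extension
  let Φ : E ≃ᵐ (ℝ × ℝ) × (Fin k → ℝ) :=
    B.measurableEquiv.trans <| (MeasurableEquiv.toLp 2 _).symm.trans <|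
      (MeasurableEquiv.sumPiEquivProdPi fun _ => ℝ).trans <|
        MeasurableEquiv.finTwoArrow.prodCongr (MeasurableEquiv.refl _)
  have hΦ : MeasurePreserving Φ := by
    have := ((volume_preserving_finTwoArrow ℝ).prod (MeasurePreserving.id volume)).comp <|
      (volume_measurePreserving_sumPiEquivProdPi fun _ => ℝ).comp <|
        (EuclideanSpace.volume_preserving_symm_measurableEquiv_toLp _).comp
          B.measurePreserving_measurableEquiv
    rwa [← Measure.volume_eq_prod] at this
  have hB₁ : B (.inl 0) = e₁ := hB 0
  have hB₂ : B (.inl 1) = e₂ := hB 1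
  have hΦ_apply (y : E) : Φ y = ((⟪e₁, y⟫, ⟪e₂, y⟫), fun j => ⟪B (.inr j), y⟫) := by
    simp only [← hB₁, ← hB₂, ← B.repr_apply_apply]
    rfl
  have hball (y : E) :
      y ∈ ball 0 1 ↔ ⟪e₁, y⟫ ^ 2 + ⟪e₂, y⟫ ^ 2 + ∑ j, ⟪B (.inr j), y⟫ ^ 2 < 1 := by
    rw [mem_ball_zero_iff, ← sq_lt_one_iff₀ (norm_nonneg y), ← B.sum_sq_norm_inner_right y,
      Fintype.sum_sum_type, Fin.sum_univ_two, hB₁, hB₂]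
    simp only [Real.norm_eq_abs, sq_abs]
  -- `g s` is the volume of the slice of the unit ball at squared distance `s` from the axis plane.
  refine ⟨fun s => volume {z : Fin k → ℝ | ∑ j, z j ^ 2 < 1 - s}, Antitone.measurable
    fun s t hst => measure_mono <| ofPred_subset_ofPred.2 fun z hz => by linarith, ?_⟩
  ext W hW
  rw [Measure.map_apply (by fun_prop) hW, Measure.restrict_apply (hW.preimage (by fun_prop)),
    withDensity_apply _ hW, ← volume_prod_sumSq_lt hW, ← hΦ.measure_preimage_equiv]
  congr 1 with y
  simp only [mem_inter_iff, mem_preimage, mem_ofPred_eq, hΦ_apply, hball]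

theorem volume_inner_pair_preimage_inter_ball {e₁ e₂ : E} (he : Orthonormal ℝ ![e₁, e₂])
    {W : Set (ℝ × ℝ)} (hW : MeasurableSet W)
    (hcone : ∀ r : ℝ, 0 < r → ∀ q : ℝ × ℝ, r • q ∈ W ↔ q ∈ W) :
    volume ((fun y => (⟪e₁, y⟫, ⟪e₂, y⟫)) ⁻¹' W ∩ ball (0 : E) 1) =
      volume {φ ∈ Ioo (-π) π | (cos φ, sin φ) ∈ W} * volume (ball (0 : E) 1) /
        ENNReal.ofReal (2 * π) := by
  obtain ⟨g, hg, hmap⟩ := exists_map_restrict_ball_inner_pair_eq_withDensity he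
  have hproj : ∀ W : Set (ℝ × ℝ), MeasurableSet W →
      volume ((fun y => (⟪e₁, y⟫, ⟪e₂, y⟫)) ⁻¹' W ∩ ball (0 : E) 1) =
        ∫⁻ q in W, g (q.1 ^ 2 + q.2 ^ 2) := by
    intro W hW
    rw [← withDensity_apply _ hW, ← hmap, Measure.map_apply (by fun_prop) hW,
      Measure.restrict_apply (hW.preimage (by fun_prop))]
  have hball : volume (ball (0 : E) 1) =
      ENNReal.ofReal (2 * π) * ∫⁻ r in Ioi 0, ENNReal.ofReal r * g (r ^ 2) := by
    have := hproj univ .univ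
    rw [preimage_univ, univ_inter,
      setLIntegral_cone_radial .univ (fun _ _ _ => Iff.rfl) hg] at this
    simpa only [mem_univ, and_true, ofPred_mem_eq, volume_Ioo, sub_neg_eq_add, ← two_mul]
      using this
  rw [hproj W hW, setLIntegral_cone_radial hW hcone hg, hball, mul_left_comm, mul_div_assoc,
    ENNReal.mul_div_cancel (ENNReal.ofReal_pos.2 (by positivity)).ne' ENNReal.ofReal_ne_top]

theorem volume_separatingDirections_cos_sub_sin_inter_ball {e₁ e₂ : E}
    (he : Orthonormal ℝ ![e₁, e₂]) {α : ℝ} (hα₀ : 0 < α) (hα : α < π / 2) :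
    volume (separatingDirections (cos α • e₁ - sin α • e₂) (cos α • e₁ + sin α • e₂) ∩
        ball 0 1) = ENNReal.ofReal (2 * α / π) * volume (ball (0 : E) 1) := by
  rw [separatingDirections_cos_sub_sin, volume_inner_pair_preimage_inter_ball he
    (measurableSet_doubleWedge α) fun r hr => smul_mem_doubleWedge_iff hr,
    volume_angles_doubleWedge hα₀ hα, ENNReal.mul_div_right_comm,
    ← ENNReal.ofReal_div_of_pos (by positivity)]
  congr 2
  field_simp
  ring

theorem volume_separatingDirections_inter_ball_of_norm_eq_one {a c : E} (ha : ‖a‖ = 1)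
    (hc : ‖c‖ = 1) (h₀ : 0 < angle a c) (hπ : angle a c < π) :
    volume (separatingDirections a c ∩ ball 0 1) =
      ENNReal.ofReal (angle a c / π) * volume (ball (0 : E) 1) := by
  obtain ⟨e₁, e₂, he, hae, hce⟩ := exists_orthonormal_eq_cos_half_angle ha hc h₀ hπ
  set θ := angle a c
  rw [hae, hce, volume_separatingDirections_cos_sub_sin_inter_ball he (by linarith)
    (by linarith)]
  ring_nf

theorem volume_separatingDirections_inter_ball {x x' : E} (hx : x ≠ 0) (hx' : x' ≠ 0) :
    volume (separatingDirections x x' ∩ ball 0 1) =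
      ENNReal.ofReal (angle x x' / π) * volume (ball (0 : E) 1) := by
  rcases (angle_nonneg x x').eq_or_lt with h₀ | h₀
  · obtain ⟨-, r, hr, rfl⟩ := angle_eq_zero_iff.1 h₀.symm
    rw [← h₀, separatingDirections_smul_right hr, separatingDirections_self]
    simp
  rcases (angle_le_pi x x').eq_or_lt with hπ | hπ
  · obtain ⟨-, r, hr, rfl⟩ := angle_eq_pi_iff.1 hπ
    have hnull : volume (separatingDirections x (r • x))ᶜ = 0 :=
      measure_mono_null (compl_separatingDirections_smul_subset_of_neg hr)
        (Measure.addHaar_submodule _ _ fun h => hx <| inner_self_eq_zero.1 <|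
          Submodule.mem_orthogonal_singleton_iff_inner_right.1 (Submodule.eq_top_iff'.1 h x))
    rw [hπ, div_self pi_ne_zero, ENNReal.ofReal_one, one_mul, inter_comm,
      measure_inter_conull hnull]
  have ha : ‖‖x‖⁻¹ • x‖ = 1 := norm_smul_inv_norm hx
  have hc : ‖‖x'‖⁻¹ • x'‖ = 1 := norm_smul_inv_norm hx'
  have hangle : angle (‖x‖⁻¹ • x) (‖x'‖⁻¹ • x') = angle x x' := by
    rw [angle_smul_left_of_pos _ _ (by positivity), angle_smul_right_of_pos _ _ (by positivity)]
  rw [← separatingDirections_smul_left (inv_pos.2 (norm_pos_iff.2 hx)),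
    ← separatingDirections_smul_right (inv_pos.2 (norm_pos_iff.2 hx')), ← hangle,
    volume_separatingDirections_inter_ball_of_norm_eq_one ha hc (hangle ▸ h₀) (hangle ▸ hπ)]

end

theorem stmt_7_general {V : Type*} (N : ℕ)
    (x : V → EuclideanSpace ℝ (Fin N)) (hx : ∀ v, x v ≠ 0)
    (u v : V) :
    ((((volume : Measure (EuclideanSpace ℝ (Fin N))).toSphere Set.univ)⁻¹ •
        (volume : Measure (EuclideanSpace ℝ (Fin N))).toSphere)
      {z : Metric.sphere (0 : EuclideanSpace ℝ (Fin N)) 1 |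
        ¬ ((0 ≤ (inner ℝ (x u) (z : EuclideanSpace ℝ (Fin N)) : ℝ)) ↔
            (0 ≤ (inner ℝ (x v) (z : EuclideanSpace ℝ (Fin N)) : ℝ)))})
      = ENNReal.ofReal
          (1 / Real.pi * Real.arccos ((inner ℝ (x u) (x v) : ℝ) / (‖x u‖ * ‖x v‖))) := by
  have : Nontrivial (EuclideanSpace ℝ (Fin N)) := nontrivial_of_ne _ _ (hx u)
  have hsphere : (Module.finrank ℝ (EuclideanSpace ℝ (Fin N)) : ℝ≥0∞) *
      volume (ball (0 : EuclideanSpace ℝ (Fin N)) 1) ≠ 0 :=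
    mul_ne_zero (Nat.cast_ne_zero.2 Module.finrank_pos.ne') (measure_ball_pos _ _ one_pos).ne'
  rw [Measure.smul_apply, smul_eq_mul]
  change _ * volume.toSphere (((↑) : sphere (0 : EuclideanSpace ℝ (Fin N)) 1 → _) ⁻¹'
    separatingDirections (x u) (x v)) = _
  rw [Measure.toSphere_apply_univ, Measure.toSphere_preimage_cone _
    (measurableSet_separatingDirections _ _) fun r hr => smul_mem_separatingDirections_iff hr,
    volume_separatingDirections_inter_ball (hx u) (hx v),
    mul_left_comm _ (ENNReal.ofReal _), mul_left_comm _ (ENNReal.ofReal _),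
    ENNReal.inv_mul_cancel hsphere (ENNReal.mul_ne_top (by simp) measure_ball_lt_top.ne),
    mul_one, one_div_mul_eq_div]
  rfl

/-- Goemans–Williamson hyperplane rounding: for nonzero vectors `{xᵛ} ⊂ ℝᴺ` and a uniformly
random unit vector `z`, with `A = {v : ⟪xᵛ, z⟫ ≥ 0}`, the probability that an edge `uv`
crosses the cut `(A, Aᶜ)` equals `(1/π)·arccos(⟪xᵘ,xᵛ⟫/(‖xᵘ‖‖xᵛ‖))`. -/
theorem stmt_7 {V : Type*} (G : SimpleGraph V) (N : ℕ)
    (x : V → EuclideanSpace ℝ (Fin N)) (hx : ∀ v, x v ≠ 0)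
    (u v : V) (huv : G.Adj u v) :
    ((((volume : Measure (EuclideanSpace ℝ (Fin N))).toSphere Set.univ)⁻¹ •
        (volume : Measure (EuclideanSpace ℝ (Fin N))).toSphere)
      {z : Metric.sphere (0 : EuclideanSpace ℝ (Fin N)) 1 |
        ¬ ((0 ≤ (inner ℝ (x u) (z : EuclideanSpace ℝ (Fin N)) : ℝ)) ↔
            (0 ≤ (inner ℝ (x v) (z : EuclideanSpace ℝ (Fin N)) : ℝ)))})
      = ENNReal.ofReal
          (1 / Real.pi * Real.arccos ((inner ℝ (x u) (x v) : ℝ) / (‖x u‖ * ‖x v‖))) :=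
  stmt_7_general N x hx u v
end

section
/- Let G be a graph with m edges on n vertices, and let c > 0 and 1 ≤ α ≤ 2 be constants such that every vertex subset S ⊆ V(G) spans at most c|S|^α edges. Then for each fixed τ ∈ (0,1), the sum Σ_{v ∈ V(G)} d(v)^τ is at least a positive constant (depending only on c, α, τ) times m^{τ + (1−τ)/α}. -/
/-!
Put `x = m ^ (1 - 1/α)` and let `S` be the set of vertices of degree above `x`. If `S` spans at
least `m / 2` edges, then `c |S| ^ α ≥ m / 2`, so there are at least `(m / 2c) ^ (1/α)` vertices
each contributing more than `x ^ τ`. Otherwise at least `m / 2` edges meet a vertex of degree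
`d ≤ x`, and each such vertex contributes `d ^ τ ≥ x ^ (τ - 1) d`, so the low-degree vertices
contribute at least `x ^ (τ - 1) m / 2`. In both cases the bound is a constant times
`m ^ (τ + (1 - τ)/α)`.
-/

open Finset Real

namespace SimpleGraph

variable {V : Type*} [Fintype V] (G : SimpleGraph V) [DecidableRel G.Adj]

theorem ncard_edgeSet_eq_card_edgeFinset : G.edgeSet.ncard = #G.edgeFinset := by
  rw [← coe_edgeFinset, Set.ncard_coe_finset]

variable [DecidableEq V]

theorem ncard_edgeSet_le_ncard_edgeSet_induce_add_sum_degree (s : Finset V) :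
    G.edgeSet.ncard ≤ (G.induce ↑s).edgeSet.ncard + ∑ v ∈ sᶜ, G.degree v := by
  have hcross : #{e ∈ G.edgeFinset | ¬e.toFinset ⊆ s} ≤ ∑ v ∈ sᶜ, G.degree v := by
    calc #{e ∈ G.edgeFinset | ¬e.toFinset ⊆ s}
        ≤ #(sᶜ.biUnion fun v ↦ G.incidenceFinset v) := by
          refine card_le_card fun e he ↦ ?_
          obtain ⟨he, hes⟩ := mem_filter.1 he
          obtain ⟨v, hve, hvs⟩ := not_subset.1 hes
          exact mem_biUnion.2 ⟨v, mem_compl.2 hvs,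
            (mem_incidenceFinset _ _ _).2 ⟨mem_edgeFinset.1 he, Sym2.mem_toFinset.1 hve⟩⟩
      _ ≤ ∑ v ∈ sᶜ, #(G.incidenceFinset v) := card_biUnion_le
      _ = ∑ v ∈ sᶜ, G.degree v := by simp only [card_incidenceFinset_eq_degree]
  rw [ncard_edgeSet_eq_card_edgeFinset, ncard_edgeSet_eq_card_edgeFinset,
    ← card_filter_edgeFinset_toFinset_subset,
    ← card_filter_add_card_filter_not (s := G.edgeFinset) (p := fun e ↦ e.toFinset ⊆ s)]
  omega

theorem ncard_edgeSet_le_mul_rpow_add_sum_degree_compl {c α : ℝ}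
    (hG : ∀ s : Finset V, ((G.induce ↑s).edgeSet.ncard : ℝ) ≤ c * (#s : ℝ) ^ α) (s : Finset V) :
    (G.edgeSet.ncard : ℝ) ≤ c * (#s : ℝ) ^ α + ∑ v ∈ sᶜ, (G.degree v : ℝ) := by
  have h := Nat.cast_le (α := ℝ).2 (G.ncard_edgeSet_le_ncard_edgeSet_induce_add_sum_degree s)
  push_cast at h
  exact h.trans (add_le_add_left (hG s) _)

end SimpleGraph

theorem Real.rpow_sub_one_mul_le_rpow {d x τ : ℝ} (hd : 0 ≤ d) (hdx : d ≤ x) (hτ : τ ≤ 1) :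
    x ^ (τ - 1) * d ≤ d ^ τ := by
  rcases hd.eq_or_lt with rfl | hd
  · simpa using rpow_nonneg le_rfl τ
  calc x ^ (τ - 1) * d ≤ d ^ (τ - 1) * d :=
        mul_le_mul_of_nonneg_right (rpow_le_rpow_of_nonpos hd hdx (by linarith)) hd.le
    _ = d ^ τ := by rw [← rpow_add_one hd.ne', sub_add_cancel]

theorem Real.rpow_inv_mul_rpow_one_sub_inv_rpow {M α : ℝ} (hM : 0 < M) (hα : α ≠ 0) (τ : ℝ) :
    M ^ α⁻¹ * (M ^ (1 - α⁻¹)) ^ τ = M ^ (τ + (1 - τ) / α) := by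
  rw [← rpow_mul hM.le, ← rpow_add hM]
  congr 1
  field_simp
  ring

theorem Real.rpow_one_sub_inv_rpow_sub_one_mul {M α : ℝ} (hM : 0 < M) (hα : α ≠ 0) (τ : ℝ) :
    (M ^ (1 - α⁻¹)) ^ (τ - 1) * M = M ^ (τ + (1 - τ) / α) := by
  rw [← rpow_mul hM.le, ← rpow_add_one hM.ne']
  congr 1
  field_simp
  ring

namespace Finset

variable {ι : Type*} (s : Finset ι) {f : ι → ℝ} {x τ : ℝ}

theorem card_filter_lt_mul_rpow_le_sum_rpow (hf : ∀ i ∈ s, 0 ≤ f i) (hx : 0 ≤ x)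
    (hτ : 0 ≤ τ) : #{i ∈ s | x < f i} * x ^ τ ≤ ∑ i ∈ s, f i ^ τ := by
  calc #{i ∈ s | x < f i} * x ^ τ ≤ ∑ i ∈ s with x < f i, f i ^ τ := by
        rw [← nsmul_eq_mul]
        exact card_nsmul_le_sum _ _ _ fun i hi ↦ rpow_le_rpow hx (mem_filter.1 hi).2.le hτ
    _ ≤ ∑ i ∈ s, f i ^ τ :=
        sum_le_sum_of_subset_of_nonneg (filter_subset _ _) fun i hi _ ↦ rpow_nonneg (hf i hi) _

theorem rpow_sub_one_mul_sum_filter_le_le_sum_rpow (hf : ∀ i ∈ s, 0 ≤ f i) (hτ : τ ≤ 1) :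
    x ^ (τ - 1) * ∑ i ∈ s with f i ≤ x, f i ≤ ∑ i ∈ s, f i ^ τ := by
  rw [mul_sum]
  calc ∑ i ∈ s with f i ≤ x, x ^ (τ - 1) * f i ≤ ∑ i ∈ s with f i ≤ x, f i ^ τ :=
        sum_le_sum fun i hi ↦
          have ⟨his, hix⟩ := mem_filter.1 hi
          rpow_sub_one_mul_le_rpow (hf i his) hix hτ
    _ ≤ ∑ i ∈ s, f i ^ τ :=
        sum_le_sum_of_subset_of_nonneg (filter_subset _ _) fun i hi _ ↦ rpow_nonneg (hf i hi) _

end Finset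

namespace SimpleGraph

variable {V : Type*} [Fintype V] (G : SimpleGraph V) [DecidableRel G.Adj]

theorem mul_ncard_edgeSet_rpow_le_sum_degree_rpow {c α τ : ℝ} (hc : 0 < c) (hα : 0 < α)
    (hτ₀ : 0 ≤ τ) (hτ₁ : τ ≤ 1)
    (hG : ∀ s : Finset V, ((G.induce ↑s).edgeSet.ncard : ℝ) ≤ c * (#s : ℝ) ^ α) :
    min ((2 * c) ^ (-α⁻¹)) (1 / 2) * (G.edgeSet.ncard : ℝ) ^ (τ + (1 - τ) / α) ≤
      ∑ v, (G.degree v : ℝ) ^ τ := by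
  classical
  have hd (v : V) (_ : v ∈ univ) : (0 : ℝ) ≤ G.degree v := Nat.cast_nonneg _
  obtain ⟨M, hM_eq⟩ : ∃ M : ℝ, M = G.edgeSet.ncard := ⟨_, rfl⟩
  rw [← hM_eq]
  set β := τ + (1 - τ) / α
  rcases (hM_eq ▸ Nat.cast_nonneg _ : (0 : ℝ) ≤ M).eq_or_lt with hM | hM
  · have hβ_pos : 0 < β := by
      rcases hτ₀.eq_or_lt with rfl | hτ
      · simpa [β] using hα
      · have := div_nonneg (sub_nonneg.2 hτ₁) hα.le
        linarith
    rw [← hM, zero_rpow hβ_pos.ne', mul_zero]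
    positivity
  set x := M ^ (1 - α⁻¹)
  set S : Finset V := {v | x < G.degree v}
  have hedges : M ≤ c * (#S : ℝ) ^ α + ∑ v with (G.degree v : ℝ) ≤ x, (G.degree v : ℝ) := by
    convert hM_eq ▸ G.ncard_edgeSet_le_mul_rpow_add_sum_degree_compl hG S using 3
    ext v
    simp [S]
  rcases le_or_gt (M / 2) (c * (#S : ℝ) ^ α) with hmany | hfew
  · have hS : (M / (2 * c)) ^ α⁻¹ ≤ #S := by
      rw [rpow_inv_le_iff_of_pos (by positivity) (by positivity) hα, div_le_iff₀ (by positivity)]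
      linarith
    calc min ((2 * c) ^ (-α⁻¹)) (1 / 2) * M ^ β ≤ (2 * c) ^ (-α⁻¹) * M ^ β := by
          gcongr
          exact min_le_left _ _
      _ = (M / (2 * c)) ^ α⁻¹ * x ^ τ := by
          rw [div_rpow hM.le (by positivity), rpow_neg (by positivity),
            ← rpow_inv_mul_rpow_one_sub_inv_rpow hM hα.ne']
          ring
      _ ≤ #S * x ^ τ := by gcongr
      _ ≤ _ := card_filter_lt_mul_rpow_le_sum_rpow _ hd (by positivity) hτ₀
  · calc min ((2 * c) ^ (-α⁻¹)) (1 / 2) * M ^ β ≤ 1 / 2 * M ^ β := by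
          gcongr
          exact min_le_right _ _
      _ = x ^ (τ - 1) * (M / 2) := by
          rw [← rpow_one_sub_inv_rpow_sub_one_mul hM hα.ne']
          ring
      _ ≤ x ^ (τ - 1) * ∑ v with (G.degree v : ℝ) ≤ x, (G.degree v : ℝ) := by
          gcongr
          linarith
      _ ≤ _ := rpow_sub_one_mul_sum_filter_le_le_sum_rpow _ hd hτ₁

end SimpleGraph

theorem stmt_11_general (c α τ : ℝ) (hc : 0 < c) (hα1 : 1 ≤ α)
    (hτ1 : 0 < τ) (hτ2 : τ < 1) :
    ∃ C > 0, ∀ (n : ℕ) (G : SimpleGraph (Fin n)) [DecidableRel G.Adj],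
      (∀ S : Finset (Fin n),
          ((G.induce (S : Set (Fin n))).edgeSet.ncard : ℝ) ≤ c * (S.card : ℝ) ^ α) →
      C * (G.edgeSet.ncard : ℝ) ^ (τ + (1 - τ) / α) ≤ ∑ v, (G.degree v : ℝ) ^ τ :=
  ⟨min ((2 * c) ^ (-α⁻¹)) (1 / 2), lt_min (by positivity) one_half_pos, fun _ G _ hG ↦
    G.mul_ncard_edgeSet_rpow_le_sum_degree_rpow hc (by linarith) hτ1.le hτ2.le hG⟩

/-- If every vertex subset `S` of a graph `G` spans at most `c·|S|^α` edges
(`c > 0`, `1 ≤ α ≤ 2`), then for fixed `τ ∈ (0,1)` we have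
`Σ_v d(v)^τ ≥ C · m^{τ + (1−τ)/α}` for a constant `C > 0` depending only on `c, α, τ`. -/
theorem stmt_11 (c α τ : ℝ) (hc : 0 < c) (hα1 : 1 ≤ α) (hα2 : α ≤ 2)
    (hτ1 : 0 < τ) (hτ2 : τ < 1) :
    ∃ C > 0, ∀ (n : ℕ) (G : SimpleGraph (Fin n)) [DecidableRel G.Adj],
      (∀ S : Finset (Fin n),
          ((G.induce (S : Set (Fin n))).edgeSet.ncard : ℝ) ≤ c * (S.card : ℝ) ^ α) →
      C * (G.edgeSet.ncard : ℝ) ^ (τ + (1 - τ) / α) ≤ ∑ v, (G.degree v : ℝ) ^ τ :=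
  stmt_11_general c α τ hc hα1 hτ1 hτ2
end

section
/- Let G be a graph on vertex set [n], τ ∈ (0,1/2], ρ > 0, and define vectors x^i ∈ ℝⁿ as follows: x^i_i = 1 + ρdᵢ^τ/n, x^i_j = −ρdᵢ^{τ−1} for j ∈ N(i), and x^i_j = ρdᵢ^τ/n otherwise. Then for each edge ij ∈ E(G), writing d_{ij} = |N(i) ∩ N(j)|, we have ⟨x^i, x^j⟩ ≤ −ρ(dᵢ^{τ−1} + dⱼ^{τ−1}) − ρ²(dᵢdⱼ)^τ/n + 4ρ²(dᵢdⱼ)^{τ−1}·d_{ij}. -/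
/-!
Write `N = |V|` and `aᵥ = ρ dᵥ^τ`, so that `ρ dᵥ^{τ-1} = aᵥ / dᵥ` and
`xᵛ = aᵥ/N · 𝟙 + eᵥ − (aᵥ/dᵥ + aᵥ/N) · 𝟙_{N(v)}`. Expanding `⟪xⁱ, xʲ⟫` bilinearly, every term is the
size of an intersection of `V`, `{i}`, `{j}`, `N(i)`, `N(j)`, which gives the exact value
`−aᵢ/dᵢ − aⱼ/dⱼ + aᵢaⱼ (d_{ij} (1/N + 1/dᵢ)(1/N + 1/dⱼ) − (N + dᵢ + dⱼ)/N²)`.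
The bound follows from `1/N ≤ 1/dᵢ, 1/dⱼ` and `(N + dᵢ + dⱼ)/N² ≥ 1/N`.
-/

open Finset

lemma Finset.indicator_one_dotProduct_indicator_one {V R : Type*} [Fintype V] [DecidableEq V]
    [NonAssocSemiring R] (s t : Finset V) :
    (s : Set V).indicator (1 : V → R) ⬝ᵥ (t : Set V).indicator 1 = #(s ∩ t) := by
  simp [dotProduct, Set.indicator_apply, inter_comm]

namespace SimpleGraph

variable {V : Type*} [Fintype V] [DecidableEq V] (G : SimpleGraph V) [DecidableRel G.Adj]

noncomputable def vertexVector (a : ℝ) (v : V) : V → ℝ := fun k =>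
  if k = v then 1 + a / Fintype.card V
  else if G.Adj v k then -(a / G.degree v) else a / Fintype.card V

lemma vertexVector_eq_indicator (a : ℝ) (v : V) :
    G.vertexVector a v = (a / Fintype.card V) • ((univ : Finset V) : Set V).indicator 1
      + (({v} : Finset V) : Set V).indicator 1
      - (a / G.degree v + a / Fintype.card V) • (G.neighborFinset v : Set V).indicator 1 := by
  funext k
  by_cases hk : k = v
  · subst hk; simp [vertexVector, add_comm]
  · by_cases hadj : G.Adj v k <;> simp [vertexVector, hk, hadj]

lemma vertexVector_dotProduct_of_adj {i j : V} (a b : ℝ) (hij : G.Adj i j) :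
    G.vertexVector a i ⬝ᵥ G.vertexVector b j = -(a / G.degree i) - b / G.degree j
      + a * b * (#(G.neighborFinset i ∩ G.neighborFinset j)
          * (1 / Fintype.card V + 1 / G.degree i) * (1 / Fintype.card V + 1 / G.degree j)
        - (Fintype.card V + G.degree i + G.degree j) / Fintype.card V ^ 2) := by
  have hN : (Fintype.card V : ℝ) ≠ 0 := by have : Nonempty V := ⟨i⟩; positivity
  have hi : (G.degree i : ℝ) ≠ 0 := mod_cast hij.degree_pos_left.ne'
  have hj : (G.degree j : ℝ) ≠ 0 := mod_cast hij.degree_pos_right.ne'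
  simp only [vertexVector_eq_indicator, add_dotProduct, dotProduct_add, sub_dotProduct,
    dotProduct_sub, smul_dotProduct, dotProduct_smul, smul_eq_mul,
    indicator_one_dotProduct_indicator_one]
  simp only [inter_self, inter_comm, univ_inter, inter_singleton_of_mem, inter_singleton_of_notMem,
    mem_univ, mem_singleton, mem_neighborFinset, hij, hij.symm, hij.ne.symm, not_false_eq_true,
    card_univ, card_singleton, card_empty, card_neighborFinset_eq_degree, Nat.cast_one,
    CharP.cast_eq_zero, mul_one, add_zero, sub_add_cancel_right, one_div]
  field_simp
  ring

lemma vertexVector_dotProduct_le_of_adj {i j : V} {a b : ℝ} (hab : 0 ≤ a * b)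
    (hij : G.Adj i j) :
    G.vertexVector a i ⬝ᵥ G.vertexVector b j ≤
      -(a / G.degree i) - b / G.degree j - a * b / Fintype.card V
        + 4 * (a * b / (G.degree i * G.degree j)) * #(G.neighborFinset i ∩ G.neighborFinset j) := by
  have hdi : (0 : ℝ) < G.degree i := mod_cast hij.degree_pos_left
  have hdj : (0 : ℝ) < G.degree j := mod_cast hij.degree_pos_right
  have hdiN : (G.degree i : ℝ) ≤ Fintype.card V := mod_cast (G.degree_lt_card_verts i).le
  have hdjN : (G.degree j : ℝ) ≤ Fintype.card V := mod_cast (G.degree_lt_card_verts j).le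
  rw [G.vertexVector_dotProduct_of_adj a b hij]
  set N : ℝ := (Fintype.card V : ℝ)
  set di : ℝ := (G.degree i : ℝ)
  set dj : ℝ := (G.degree j : ℝ)
  set m : ℝ := (#(G.neighborFinset i ∩ G.neighborFinset j) : ℝ)
  have hN : 0 < N := hdi.trans_le hdiN
  have hinv (d : ℝ) (hd : 0 < d) (hdN : d ≤ N) : 1 / N + 1 / d ≤ 2 / d := by
    have := one_div_le_one_div_of_le hd hdN
    linarith [show 2 / d = 1 / d + 1 / d by ring]
  have hprod : (1 / N + 1 / di) * (1 / N + 1 / dj) ≤ 4 / (di * dj) :=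
    calc (1 / N + 1 / di) * (1 / N + 1 / dj) ≤ 2 / di * (2 / dj) := by
          gcongr
          exacts [hinv di hdi hdiN, hinv dj hdj hdjN]
      _ = 4 / (di * dj) := by ring
  have hsize : 1 / N ≤ (N + di + dj) / N ^ 2 := by
    rw [div_le_div_iff₀ hN (by positivity)]
    nlinarith
  have hbracket : m * (1 / N + 1 / di) * (1 / N + 1 / dj) - (N + di + dj) / N ^ 2
      ≤ m * (4 / (di * dj)) - 1 / N := by
    rw [mul_assoc]
    linarith [mul_le_mul_of_nonneg_left hprod (by positivity : 0 ≤ m)]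
  linarith [mul_le_mul_of_nonneg_left hbracket hab, show a * b * (m * (4 / (di * dj)) - 1 / N)
    = -(a * b / N) + 4 * (a * b / (di * dj)) * m by ring]

end SimpleGraph

theorem stmt_15_general (n : ℕ) (G : SimpleGraph (Fin n)) [DecidableRel G.Adj]
    (τ ρ : ℝ)
    (x : Fin n → EuclideanSpace ℝ (Fin n))
    (hx : ∀ v j, x v j =
      if j = v then 1 + ρ * (G.degree v : ℝ) ^ τ / n
      else if G.Adj v j then -(ρ * (G.degree v : ℝ) ^ (τ - 1))
      else ρ * (G.degree v : ℝ) ^ τ / n)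
    (i j : Fin n) (hij : G.Adj i j) :
    (inner ℝ (x i) (x j) : ℝ) ≤
      -(ρ * ((G.degree i : ℝ) ^ (τ - 1) + (G.degree j : ℝ) ^ (τ - 1)))
        - ρ ^ 2 * ((G.degree i : ℝ) * (G.degree j : ℝ)) ^ τ / n
        + 4 * ρ ^ 2 * ((G.degree i : ℝ) * (G.degree j : ℝ)) ^ (τ - 1) *
            ((G.neighborFinset i ∩ G.neighborFinset j).card : ℝ) := by
  have hdi : (G.degree i : ℝ) ≠ 0 := mod_cast hij.degree_pos_left.ne'
  have hdj : (G.degree j : ℝ) ≠ 0 := mod_cast hij.degree_pos_right.ne'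
  have hvec (v : Fin n) (hv : (G.degree v : ℝ) ≠ 0) :
      (x v).ofLp = G.vertexVector (ρ * (G.degree v : ℝ) ^ τ) v := by
    funext k
    rw [hx, SimpleGraph.vertexVector, Fintype.card_fin, Real.rpow_sub_one hv, ← mul_div_assoc]
  have hnonneg : 0 ≤ ρ * (G.degree i : ℝ) ^ τ * (ρ * (G.degree j : ℝ) ^ τ) := by
    rw [mul_mul_mul_comm]; exact mul_nonneg (mul_self_nonneg ρ) (by positivity)
  calc inner ℝ (x i) (x j)
      = G.vertexVector (ρ * (G.degree i : ℝ) ^ τ) i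
          ⬝ᵥ G.vertexVector (ρ * (G.degree j : ℝ) ^ τ) j := by
        rw [EuclideanSpace.inner_eq_star_dotProduct, star_trivial, dotProduct_comm, hvec i hdi,
          hvec j hdj]
    _ ≤ _ := G.vertexVector_dotProduct_le_of_adj hnonneg hij
    _ = _ := by
      rw [Fintype.card_fin, Real.rpow_sub_one hdi, Real.rpow_sub_one hdj,
        Real.rpow_sub_one (mul_ne_zero hdi hdj), Real.mul_rpow (by positivity) (by positivity)]
      ring

/-- Inner product bound for the Goemans–Williamson vectors: with `τ ∈ (0,1/2]`, `ρ > 0`,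
vectors `xⁱ ∈ ℝⁿ` given by `xⁱᵢ = 1 + ρdᵢ^τ/n`, `xⁱⱼ = −ρdᵢ^{τ−1}` for `j ∈ N(i)` and
`xⁱⱼ = ρdᵢ^τ/n` otherwise, every edge `ij` satisfies
`⟪xⁱ, xʲ⟫ ≤ −ρ(dᵢ^{τ−1} + dⱼ^{τ−1}) − ρ²(dᵢdⱼ)^τ/n + 4ρ²(dᵢdⱼ)^{τ−1}·d_{ij}`,
where `d_{ij} = |N(i) ∩ N(j)|`. -/
theorem stmt_15 (n : ℕ) (G : SimpleGraph (Fin n)) [DecidableRel G.Adj]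
    (τ ρ : ℝ) (hτ1 : 0 < τ) (hτ2 : τ ≤ 1 / 2) (hρ : 0 < ρ)
    (x : Fin n → EuclideanSpace ℝ (Fin n))
    (hx : ∀ v j, x v j =
      if j = v then 1 + ρ * (G.degree v : ℝ) ^ τ / n
      else if G.Adj v j then -(ρ * (G.degree v : ℝ) ^ (τ - 1))
      else ρ * (G.degree v : ℝ) ^ τ / n)
    (i j : Fin n) (hij : G.Adj i j) :
    (inner ℝ (x i) (x j) : ℝ) ≤
      -(ρ * ((G.degree i : ℝ) ^ (τ - 1) + (G.degree j : ℝ) ^ (τ - 1)))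
        - ρ ^ 2 * ((G.degree i : ℝ) * (G.degree j : ℝ)) ^ τ / n
        + 4 * ρ ^ 2 * ((G.degree i : ℝ) * (G.degree j : ℝ)) ^ (τ - 1) *
            ((G.neighborFinset i ∩ G.neighborFinset j).card : ℝ) :=
  stmt_15_general n G τ ρ x hx i j hij
end

section
/- Let G be a graph such that for every vertex v, the subgraph induced on N(v) contains at most c·d(v)^{2−ε} edges, where c > 0 and ε ∈ [0,1]. Let τ = min{ε, 1/2}, and for each edge ij let d_{ij} = |N(i) ∩ N(j)|. Then Σ_{ij ∈ E(G)} (dᵢdⱼ)^{τ−1}·d_{ij} ≤ c · Σ_{v ∈ V(G)} d(v)^τ. -/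
/-!
By AM-GM, `2 (dᵢdⱼ)^{τ-1} ≤ dᵢ^{2τ-2} + dⱼ^{2τ-2}`, and since `d_{ij}` is symmetric the sum over
ordered adjacent pairs collapses to `Σᵢ dᵢ^{2τ-2} Σ_{j ∈ N(i)} d_{ij}`. The inner sum counts each
edge of `G[N(i)]` twice, so it is at most `2c·dᵢ^{2-ε} ≤ 2c·dᵢ^{2-τ}` as `τ ≤ ε`, and each
vertex contributes at most `2c·dᵢ^τ`.
-/

namespace Real

theorem two_mul_rpow_mul_le_rpow_add_rpow {x y : ℝ} (hx : 0 ≤ x) (hy : 0 ≤ y) (s : ℝ) :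
    2 * (x * y) ^ s ≤ x ^ (2 * s) + y ^ (2 * s) := by
  rw [mul_rpow hx hy, mul_comm 2 s, rpow_mul hx, rpow_mul hy, rpow_two, rpow_two, ← mul_assoc]
  exact two_mul_le_add_sq _ _

end Real

namespace SimpleGraph

open Finset

variable {V : Type*} [Fintype V] (G : SimpleGraph V) [DecidableRel G.Adj]

theorem sum_filter_adj_eq_sum_sum_neighborFinset {M : Type*} [AddCommMonoid M] (f : V → V → M) :
    ∑ p ∈ univ.filter (fun p : V × V => G.Adj p.1 p.2), f p.1 p.2 =
      ∑ i, ∑ j ∈ G.neighborFinset i, f i j := by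
  rw [← univ_product_univ, sum_filter, sum_product]
  simp [neighborFinset_eq_filter, sum_filter]

theorem sum_filter_adj_swap {M : Type*} [AddCommMonoid M] (f : V → V → M) :
    ∑ p ∈ univ.filter (fun p : V × V => G.Adj p.1 p.2), f p.2 p.1 =
      ∑ p ∈ univ.filter (fun p : V × V => G.Adj p.1 p.2), f p.1 p.2 :=
  sum_equiv (Equiv.prodComm V V) (by simp [adj_comm]) (by simp)

variable [DecidableEq V]

theorem sum_card_neighborFinset_inter_eq_two_mul_ncard_edgeSet_induce (v : V) :
    ∑ j ∈ G.neighborFinset v, #(G.neighborFinset v ∩ G.neighborFinset j) =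
      2 * (G.induce (G.neighborSet v)).edgeSet.ncard := by
  have hdeg (j : G.neighborSet v) :
      (G.induce (G.neighborSet v)).degree j = #(G.neighborFinset v ∩ G.neighborFinset j) := by
    rw [← card_neighborFinset_eq_degree, ← card_map, map_neighborFinset_induce,
      ← neighborFinset_def, inter_comm]
  rw [← coe_edgeFinset, Set.ncard_coe_finset, ← sum_degrees_eq_twice_card_edges]
  simp only [hdeg]
  rw [neighborFinset_def, ← sum_set_coe]

theorem rpow_mul_sum_card_neighborFinset_inter_le {c ε τ : ℝ} (hc : 0 ≤ c) (hτ : τ ≤ ε) (v : V)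
    (hv : ((G.induce (G.neighborSet v)).edgeSet.ncard : ℝ) ≤ c * (G.degree v : ℝ) ^ (2 - ε)) :
    (G.degree v : ℝ) ^ (2 * (τ - 1)) *
        ∑ j ∈ G.neighborFinset v, (#(G.neighborFinset v ∩ G.neighborFinset j) : ℝ) ≤
      2 * c * (G.degree v : ℝ) ^ τ := by
  rcases (G.degree v).eq_zero_or_pos with hd | hd
  · have : G.neighborFinset v = ∅ := by rwa [← card_eq_zero, card_neighborFinset_eq_degree]
    simp only [this, sum_empty, mul_zero]
    positivity
  have hd1 : (1 : ℝ) ≤ G.degree v := by exact_mod_cast hd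
  have hsum : ∑ j ∈ G.neighborFinset v, (#(G.neighborFinset v ∩ G.neighborFinset j) : ℝ) ≤
      2 * c * (G.degree v : ℝ) ^ (2 - τ) := by
    have hcount := congrArg (Nat.cast (R := ℝ))
      (G.sum_card_neighborFinset_inter_eq_two_mul_ncard_edgeSet_induce v)
    push_cast at hcount
    rw [hcount, mul_assoc]
    gcongr
    exact hv.trans (by gcongr)
  calc _ ≤ (G.degree v : ℝ) ^ (2 * (τ - 1)) * (2 * c * (G.degree v : ℝ) ^ (2 - τ)) := by
        gcongr
    _ = 2 * c * (G.degree v : ℝ) ^ τ := by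
        rw [mul_left_comm, ← Real.rpow_add (by positivity)]
        ring_nf

theorem sum_adj_rpow_mul_card_neighborFinset_inter_le {c ε τ : ℝ} (hc : 0 ≤ c) (hτ : τ ≤ ε)
    (hsparse : ∀ v : V, ((G.induce (G.neighborSet v)).edgeSet.ncard : ℝ)
        ≤ c * (G.degree v : ℝ) ^ (2 - ε)) :
    ∑ p ∈ univ.filter (fun p : V × V => G.Adj p.1 p.2),
        ((G.degree p.1 : ℝ) * (G.degree p.2 : ℝ)) ^ (τ - 1) *
          (#(G.neighborFinset p.1 ∩ G.neighborFinset p.2) : ℝ)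
      ≤ 2 * c * ∑ v, (G.degree v : ℝ) ^ τ := by
  set d : V → ℝ := fun v => G.degree v
  set w : V → V → ℝ := fun i j => #(G.neighborFinset i ∩ G.neighborFinset j)
  have hw (i j : V) : w j i = w i j := by simp only [w, inter_comm]
  calc ∑ p ∈ univ.filter (fun p : V × V => G.Adj p.1 p.2), (d p.1 * d p.2) ^ (τ - 1) * w p.1 p.2
      ≤ ∑ p ∈ univ.filter (fun p : V × V => G.Adj p.1 p.2),
          (d p.1 ^ (2 * (τ - 1)) * w p.1 p.2 + d p.2 ^ (2 * (τ - 1)) * w p.2 p.1) / 2 := by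
        gcongr with p
        rw [hw, ← add_mul, mul_div_right_comm]
        gcongr
        linarith [Real.two_mul_rpow_mul_le_rpow_add_rpow (Nat.cast_nonneg (G.degree p.1))
          (Nat.cast_nonneg (G.degree p.2)) (τ - 1)]
    _ = ∑ i, d i ^ (2 * (τ - 1)) * ∑ j ∈ G.neighborFinset i, w i j := by
        rw [← sum_div, sum_add_distrib,
          G.sum_filter_adj_swap (fun i j => d i ^ (2 * (τ - 1)) * w i j), add_self_div_two,
          G.sum_filter_adj_eq_sum_sum_neighborFinset (fun i j => d i ^ (2 * (τ - 1)) * w i j)]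
        simp only [mul_sum]
    _ ≤ ∑ i, 2 * c * d i ^ τ :=
        sum_le_sum fun v _ => G.rpow_mul_sum_card_neighborFinset_inter_le hc hτ v (hsparse v)
    _ = 2 * c * ∑ v, d v ^ τ := (mul_sum ..).symm

end SimpleGraph

theorem stmt_16_general {V : Type*} [Fintype V] [DecidableEq V] (G : SimpleGraph V)
    [DecidableRel G.Adj] (c ε : ℝ) (hc : 0 < c)
    (hsparse : ∀ v : V, ((G.induce (G.neighborSet v)).edgeSet.ncard : ℝ)
        ≤ c * (G.degree v : ℝ) ^ (2 - ε)) :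
    (1 / 2) * ∑ p ∈ Finset.univ.filter (fun p : V × V => G.Adj p.1 p.2),
        ((G.degree p.1 : ℝ) * (G.degree p.2 : ℝ)) ^ (min ε (1 / 2) - 1) *
          ((G.neighborFinset p.1 ∩ G.neighborFinset p.2).card : ℝ)
      ≤ c * ∑ v, (G.degree v : ℝ) ^ (min ε (1 / 2)) := by
  have := G.sum_adj_rpow_mul_card_neighborFinset_inter_le hc.le (min_le_left ε (1 / 2)) hsparse
  linarith

/-- If every neighbourhood `N(v)` of `G` spans at most `c·d(v)^{2−ε}` edges and
`τ = min{ε, 1/2}`, then `Σ_{ij ∈ E(G)} (dᵢdⱼ)^{τ−1}·d_{ij} ≤ c·Σ_v d(v)^τ`,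
where `d_{ij} = |N(i) ∩ N(j)|`. (The sum over edges is written as half the sum over
ordered adjacent pairs.) -/
theorem stmt_16 {V : Type*} [Fintype V] [DecidableEq V] (G : SimpleGraph V)
    [DecidableRel G.Adj] (c ε : ℝ) (hc : 0 < c) (hε1 : 0 ≤ ε) (hε2 : ε ≤ 1)
    (hsparse : ∀ v : V, ((G.induce (G.neighborSet v)).edgeSet.ncard : ℝ)
        ≤ c * (G.degree v : ℝ) ^ (2 - ε)) :
    (1 / 2) * ∑ p ∈ Finset.univ.filter (fun p : V × V => G.Adj p.1 p.2),
        ((G.degree p.1 : ℝ) * (G.degree p.2 : ℝ)) ^ (min ε (1 / 2) - 1) *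
          ((G.neighborFinset p.1 ∩ G.neighborFinset p.2).card : ℝ)
      ≤ c * ∑ v, (G.degree v : ℝ) ^ (min ε (1 / 2)) :=
  stmt_16_general G c ε hc hsparse
end
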